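/- arXiv:1610.04496 — 2 statements merged into one kernel-verified Lean document; each statement's English description precedes it below -/
import Mathlib

section
/- (Poincaré inequality with inverse Bose–Einstein weight) For every continuously differentiable function φ : ℝ³ → ℝ such that the integrals ∫_{ℝ³} (e^{|p|} − 1)|∇φ(p)|² dp and ∫_{ℝ³} (e^{|p|} − 1)|φ(p)|² dp are finite, one has ∫_{ℝ³} (e^{|p|} − 1)|∇φ(p)|² dp ≥ (1/4) ∫_{ℝ³} (e^{|p|} − 1)|φ(p)|² dp. -/
/-!
Let `w(r) = e^r - 1` and `c(r) = (e^r - 1 - r) / r`, and consider the radial vector field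
`V(p) = c(|p|) p` on `ℝⁿ`, `n ≥ 1`. Since `c(r) r = e^r - 1 - r` and `c'(r) r = e^r - 1 - c(r)`,
one has `|V| ≤ w(|p|)` and `div V = w(|p|) + (n - 1) c(|p|) ≥ w(|p|)`.
The field `φ² V` is differentiable with integrable divergence `2 φ ⟪∇φ, V⟫ + φ² div V`,
so this divergence integrates to zero. Hence
`∫ w φ² ≤ ∫ φ² div V = -2 ∫ φ ⟪∇φ, V⟫ ≤ 2 ∫ w |φ| |∇φ| ≤ ½ ∫ w φ² + 2 ∫ w |∇φ|²`.
-/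

open MeasureTheory Real
open scoped RealInnerProductSpace

noncomputable def radialCoeff (r : ℝ) : ℝ := (exp r - 1 - r) / r

@[simp] lemma radialCoeff_zero : radialCoeff 0 = 0 := by simp [radialCoeff]

lemma radialCoeff_nonneg {r : ℝ} (hr : 0 ≤ r) : 0 ≤ radialCoeff r :=
  div_nonneg (by linarith [add_one_le_exp r]) hr

lemma radialCoeff_mul_self_le {r : ℝ} (hr : 0 ≤ r) : radialCoeff r * r ≤ exp r - 1 := by
  rcases hr.eq_or_lt with rfl | hr
  · simp
  rw [radialCoeff, div_mul_cancel₀ _ hr.ne']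
  linarith

lemma radialCoeff_le {r : ℝ} (hr : 0 ≤ r) : radialCoeff r ≤ exp r - 1 := by
  rcases hr.eq_or_lt with rfl | hr
  · simp
  rw [radialCoeff, div_le_iff₀ hr]
  -- `e^{-r} ≥ 1 - r`, i.e. `(1 - r) e^r ≤ 1`
  have := mul_le_mul_of_nonneg_right (add_one_le_exp (-r)) (exp_pos r).le
  rw [← exp_add, neg_add_cancel, exp_zero] at this
  nlinarith

lemma abs_radialCoeff_le {r : ℝ} (hr : |r| ≤ 1) : |radialCoeff r| ≤ |r| := by
  rcases eq_or_ne r 0 with rfl | h0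
  · simp
  rw [radialCoeff, abs_div, div_le_iff₀ (abs_pos.2 h0), ← sq, sq_abs]
  exact abs_exp_sub_one_sub_id_le hr

lemma hasDerivAt_radialCoeff {r : ℝ} (hr : r ≠ 0) :
    HasDerivAt radialCoeff ((exp r - 1 - radialCoeff r) / r) r := by
  refine ((((hasDerivAt_exp r).sub_const 1).sub (hasDerivAt_id' r)).div (hasDerivAt_id' r)
    hr).congr_deriv ?_
  simp only [radialCoeff, Pi.sub_apply]
  field_simp

lemma hasDerivAt_radialCoeff_abs_mul_self : HasDerivAt (fun t => radialCoeff |t| * t) 0 0 := by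
  rw [hasDerivAt_iff_isLittleO_nhds_zero]
  simp only [zero_add, abs_zero, radialCoeff_zero, zero_mul, sub_zero, smul_zero]
  refine (Asymptotics.IsBigO.of_bound 1 ?_).trans_isLittleO
    (Asymptotics.isLittleO_pow_id one_lt_two)
  filter_upwards [Metric.ball_mem_nhds (0 : ℝ) one_pos] with t ht
  have ht : |t| ≤ 1 := by simpa using (Metric.mem_ball.1 ht).le
  rw [Real.norm_eq_abs, Real.norm_eq_abs, abs_mul, one_mul, abs_pow, sq]
  exact mul_le_mul_of_nonneg_right
    (by simpa using abs_radialCoeff_le (r := |t|) (by simpa using ht)) (abs_nonneg t)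

@[fun_prop]
lemma measurable_radialCoeff : Measurable radialCoeff := by
  unfold radialCoeff; fun_prop

lemma HasDerivAt.norm {F : Type*} [NormedAddCommGroup F] [InnerProductSpace ℝ F]
    {f : ℝ → F} {f' : F} {t : ℝ} (hf : HasDerivAt f f' t) (h0 : f t ≠ 0) :
    HasDerivAt (fun s => ‖f s‖) (⟪f t, f'⟫ / ‖f t‖) t := by
  have h := hf.norm_sq.sqrt (by positivity)
  simp only [Real.sqrt_sq (norm_nonneg _)] at h
  convert h using 1
  field_simp

theorem integral_eq_zero_of_hasLineDerivAt_of_integrable {E F : Type*}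
    [NormedAddCommGroup E] [NormedSpace ℝ E] [FiniteDimensional ℝ E] [MeasurableSpace E]
    [BorelSpace E] [NormedAddCommGroup F] [NormedSpace ℝ F] {μ : Measure E}
    [μ.IsAddHaarMeasure] {f f' : E → F} {v : E} (hderiv : ∀ x, HasLineDerivAt ℝ f (f' x) x v)
    (hf' : Integrable f' μ) (hf : Integrable f μ) :
    ∫ x, f' x ∂μ = 0 := by
  simpa using integral_bilinear_hasLineDerivAt_right_eq_neg_left_of_integrable
    (B := ContinuousLinearMap.lsmul ℝ ℝ) (f := fun _ => (1 : ℝ)) (f' := 0)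
    (by simp) (by simpa using hf') (by simpa using hf)
    (fun x _ => (hasFDerivAt_const (1 : ℝ) x).hasLineDerivAt v) (fun x _ => hderiv x)

lemma half_mul_sq_le_of_norm_le {F : Type*} [NormedAddCommGroup F] [InnerProductSpace ℝ F]
    {w a D : ℝ} {g V : F} (hV : ‖V‖ ≤ w) (hD : w ≤ D) :
    1 / 2 * (w * a ^ 2) ≤ 2 * a * ⟪g, V⟫ + a ^ 2 * D + 2 * (w * ‖g‖ ^ 2) := by
  have hw : 0 ≤ w := (norm_nonneg V).trans hV
  have hinner : -(2 * |a| * ‖g‖ * w) ≤ 2 * a * ⟪g, V⟫ := by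
    have := (abs_real_inner_le_norm g V).trans (mul_le_mul_of_nonneg_left hV (norm_nonneg g))
    have := neg_abs_le (2 * a * ⟪g, V⟫)
    rw [abs_mul, abs_mul, abs_two] at this
    nlinarith [abs_nonneg a]
  nlinarith [mul_nonneg hw (sq_nonneg (|a| - 2 * ‖g‖)), sq_abs a,
    mul_le_mul_of_nonneg_left hD (sq_nonneg a)]

variable {ι : Type*} [Fintype ι]

noncomputable def radialField (p : EuclideanSpace ℝ ι) : EuclideanSpace ℝ ι :=
  radialCoeff ‖p‖ • p

/-- `∂ᵢ (radialField · i)`; at `p = 0` the junk value of `/ ‖p‖` gives `0`, the true value. -/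
noncomputable def radialFieldPartial (p : EuclideanSpace ℝ ι) (i : ι) : ℝ :=
  (exp ‖p‖ - 1 - radialCoeff ‖p‖) * (p i / ‖p‖) ^ 2 + radialCoeff ‖p‖

noncomputable def radialFieldDiv (p : EuclideanSpace ℝ ι) : ℝ := ∑ i, radialFieldPartial p i

lemma norm_radialField_le (p : EuclideanSpace ℝ ι) : ‖radialField p‖ ≤ exp ‖p‖ - 1 := by
  rw [radialField, norm_smul, norm_of_nonneg (radialCoeff_nonneg (norm_nonneg p))]
  exact radialCoeff_mul_self_le (norm_nonneg p)

lemma abs_radialFieldPartial_le (p : EuclideanSpace ℝ ι) (i : ι) :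
    |radialFieldPartial p i| ≤ 2 * (exp ‖p‖ - 1) := by
  have hc0 := radialCoeff_nonneg (norm_nonneg p)
  have hc := radialCoeff_le (norm_nonneg p)
  have hq : (p i / ‖p‖) ^ 2 ≤ 1 := by
    rw [div_pow]
    refine div_le_one_of_le₀ ?_ (sq_nonneg _)
    simpa using pow_le_pow_left₀ (norm_nonneg _) (PiLp.norm_apply_le p i) 2
  rw [radialFieldPartial, abs_of_nonneg (by positivity)]
  nlinarith [sq_nonneg (p i / ‖p‖)]

lemma exp_norm_sub_one_le_radialFieldDiv [Nonempty ι] (p : EuclideanSpace ℝ ι) :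
    exp ‖p‖ - 1 ≤ radialFieldDiv p := by
  rcases eq_or_ne p 0 with rfl | hp
  · simp [radialFieldDiv, radialFieldPartial]
  have hsum : ∑ i, (p i / ‖p‖) ^ 2 = 1 := by
    simp_rw [div_pow]
    rw [← Finset.sum_div, ← EuclideanSpace.real_norm_sq_eq]
    exact div_self (by positivity)
  simp only [radialFieldDiv, radialFieldPartial, Finset.sum_add_distrib, ← Finset.mul_sum, hsum,
    Finset.sum_const, Finset.card_univ, nsmul_eq_mul]
  have : (1 : ℝ) ≤ Fintype.card ι := by exact_mod_cast Fintype.card_pos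
  nlinarith [radialCoeff_nonneg (norm_nonneg p)]

@[fun_prop]
lemma measurable_radialField : Measurable (radialField (ι := ι)) := by
  unfold radialField; fun_prop

@[fun_prop]
lemma measurable_radialFieldPartial (i : ι) : Measurable (radialFieldPartial (ι := ι) · i) := by
  unfold radialFieldPartial; fun_prop

lemma hasLineDerivAt_radialField [DecidableEq ι] (x : EuclideanSpace ℝ ι) (i : ι) :
    HasLineDerivAt ℝ (fun p => radialField p i) (radialFieldPartial x i) x
      (EuclideanSpace.single i 1) := by
  unfold HasLineDerivAt
  simp only [radialField, PiLp.smul_apply, PiLp.add_apply, PiLp.single_apply, smul_eq_mul,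
    if_true, mul_one]
  rcases eq_or_ne x 0 with rfl | hx
  · simpa [radialFieldPartial, norm_smul] using hasDerivAt_radialCoeff_abs_mul_self
  set e : EuclideanSpace ℝ ι := EuclideanSpace.single i 1
  have hline : HasDerivAt (fun t : ℝ => x + t • e) e 0 := by
    simpa using ((hasDerivAt_id (0 : ℝ)).smul_const e).const_add x
  have hcoeff : HasDerivAt (fun t : ℝ => radialCoeff ‖x + t • e‖)
      ((exp ‖x‖ - 1 - radialCoeff ‖x‖) / ‖x‖ * (x i / ‖x‖)) 0 := by
    have hnorm : HasDerivAt (fun t : ℝ => ‖x + t • e‖) (x i / ‖x‖) 0 := by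
      simpa [e, EuclideanSpace.inner_single_right] using hline.norm (by simpa using hx)
    exact (hasDerivAt_radialCoeff (norm_ne_zero_iff.2 hx)).comp_of_eq 0 hnorm (by simp)
  refine (hcoeff.mul ((hasDerivAt_id' (0 : ℝ)).const_add (x i))).congr_deriv ?_
  simp only [radialFieldPartial, zero_smul, add_zero, mul_one]
  field_simp

variable {φ : EuclideanSpace ℝ ι → ℝ}

noncomputable def sqMulRadialFieldPartial (φ : EuclideanSpace ℝ ι → ℝ) (p : EuclideanSpace ℝ ι)
    (i : ι) : ℝ :=
  2 * φ p * gradient φ p i * radialField p i + φ p ^ 2 * radialFieldPartial p i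

noncomputable def sqMulRadialFieldDiv (φ : EuclideanSpace ℝ ι → ℝ) (p : EuclideanSpace ℝ ι) : ℝ :=
  ∑ i, sqMulRadialFieldPartial φ p i

lemma hasLineDerivAt_sq_mul_radialField [DecidableEq ι] (hφ : Differentiable ℝ φ)
    (x : EuclideanSpace ℝ ι) (i : ι) :
    HasLineDerivAt ℝ (fun p => φ p ^ 2 * radialField p i) (sqMulRadialFieldPartial φ x i) x
      (EuclideanSpace.single i 1) := by
  have hφi : HasLineDerivAt ℝ φ (gradient φ x i) x (EuclideanSpace.single i 1) := by
    simpa [← inner_gradient_left, EuclideanSpace.inner_single_right] using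
      (hφ x).hasFDerivAt.hasLineDerivAt (EuclideanSpace.single i 1)
  refine ((hφi.pow 2).mul (hasLineDerivAt_radialField x i)).congr_deriv ?_
  simp only [sqMulRadialFieldPartial, Pi.pow_apply, zero_smul, add_zero]
  ring

lemma sqMulRadialFieldDiv_eq (φ : EuclideanSpace ℝ ι → ℝ) (p : EuclideanSpace ℝ ι) :
    sqMulRadialFieldDiv φ p
      = 2 * φ p * ⟪gradient φ p, radialField p⟫ + φ p ^ 2 * radialFieldDiv p := by
  simp only [sqMulRadialFieldDiv, sqMulRadialFieldPartial, Finset.sum_add_distrib, radialFieldDiv,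
    Finset.mul_sum, PiLp.inner_apply, RCLike.inner_apply, conj_trivial]
  congr 1
  exact Finset.sum_congr rfl fun i _ => by ring

lemma half_mul_sq_le_sqMulRadialFieldDiv [Nonempty ι] (φ : EuclideanSpace ℝ ι → ℝ)
    (p : EuclideanSpace ℝ ι) :
    1 / 2 * ((exp ‖p‖ - 1) * φ p ^ 2)
      ≤ sqMulRadialFieldDiv φ p + 2 * ((exp ‖p‖ - 1) * ‖gradient φ p‖ ^ 2) := by
  rw [sqMulRadialFieldDiv_eq]
  exact half_mul_sq_le_of_norm_le (norm_radialField_le p) (exp_norm_sub_one_le_radialFieldDiv p)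

lemma abs_sqMulRadialFieldPartial_le (φ : EuclideanSpace ℝ ι → ℝ) (p : EuclideanSpace ℝ ι)
    (i : ι) : |sqMulRadialFieldPartial φ p i|
      ≤ (exp ‖p‖ - 1) * ‖gradient φ p‖ ^ 2 + 3 * ((exp ‖p‖ - 1) * φ p ^ 2) := by
  have hV := (PiLp.norm_apply_le (radialField p) i).trans (norm_radialField_le p)
  have hg := PiLp.norm_apply_le (gradient φ p) i
  have hD := abs_radialFieldPartial_le p i
  rw [Real.norm_eq_abs] at hV hg
  have hw : 0 ≤ exp ‖p‖ - 1 := (abs_nonneg _).trans hV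
  rw [sqMulRadialFieldPartial]
  refine (abs_add_le _ _).trans ?_
  rw [abs_mul, abs_mul (φ p ^ 2), abs_mul, abs_mul, abs_two, abs_pow]
  nlinarith [mul_nonneg hw (sq_nonneg (|φ p| - ‖gradient φ p‖)), sq_abs (φ p),
    mul_le_mul hg hV (abs_nonneg _) (norm_nonneg _), abs_nonneg (φ p),
    mul_le_mul_of_nonneg_left hD (sq_nonneg |φ p|)]

lemma integrable_sq_mul_radialField (hφ : Continuous φ)
    (h2 : Integrable (fun p => (exp ‖p‖ - 1) * φ p ^ 2)) (i : ι) :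
    Integrable (fun p => φ p ^ 2 * radialField p i) := by
  refine h2.mono' (by fun_prop) (ae_of_all _ fun p => ?_)
  rw [norm_mul, mul_comm, norm_pow, Real.norm_eq_abs (φ p), sq_abs]
  exact mul_le_mul_of_nonneg_right
    ((PiLp.norm_apply_le _ i).trans (norm_radialField_le p)) (sq_nonneg _)

lemma integrable_sqMulRadialFieldPartial (hφ : Continuous φ)
    (h1 : Integrable (fun p => (exp ‖p‖ - 1) * ‖gradient φ p‖ ^ 2))
    (h2 : Integrable (fun p => (exp ‖p‖ - 1) * φ p ^ 2)) (i : ι) :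
    Integrable (sqMulRadialFieldPartial φ · i) := by
  have : Measurable (gradient φ) :=
    (InnerProductSpace.toDual ℝ _).symm.continuous.measurable.comp (measurable_fderiv ℝ φ)
  refine (h1.add (h2.const_mul 3)).mono' ?_
    (ae_of_all _ fun p => abs_sqMulRadialFieldPartial_le φ p i)
  unfold sqMulRadialFieldPartial
  fun_prop

lemma integrable_sqMulRadialFieldDiv (hφ : Continuous φ)
    (h1 : Integrable (fun p => (exp ‖p‖ - 1) * ‖gradient φ p‖ ^ 2))
    (h2 : Integrable (fun p => (exp ‖p‖ - 1) * φ p ^ 2)) :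
    Integrable (sqMulRadialFieldDiv φ) :=
  integrable_finsetSum _ fun i _ => integrable_sqMulRadialFieldPartial hφ h1 h2 i

lemma integral_sqMulRadialFieldDiv_eq_zero (hφ : Differentiable ℝ φ)
    (h1 : Integrable (fun p => (exp ‖p‖ - 1) * ‖gradient φ p‖ ^ 2))
    (h2 : Integrable (fun p => (exp ‖p‖ - 1) * φ p ^ 2)) :
    ∫ p, sqMulRadialFieldDiv φ p = 0 := by
  classical
  unfold sqMulRadialFieldDiv
  rw [integral_finsetSum _ fun i _ => integrable_sqMulRadialFieldPartial hφ.continuous h1 h2 i]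
  refine Finset.sum_eq_zero fun i _ => ?_
  exact integral_eq_zero_of_hasLineDerivAt_of_integrable
    (hasLineDerivAt_sq_mul_radialField hφ · i)
    (integrable_sqMulRadialFieldPartial hφ.continuous h1 h2 i)
    (integrable_sq_mul_radialField hφ.continuous h2 i)

/-- **Poincaré inequality with inverse Bose–Einstein weight.**
For every C¹ function `φ : ℝ³ → ℝ` such that the weighted integrals of `|∇φ|²`
and `|φ|²` against the weight `e^{|p|} - 1` are finite, one has
`∫ (e^{|p|}-1)|∇φ|² ≥ (1/4) ∫ (e^{|p|}-1)|φ|²`. -/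
theorem poincare_inverse_BoseEinstein_weight
    (φ : EuclideanSpace ℝ (Fin 3) → ℝ) (hφ : ContDiff ℝ 1 φ)
    (h1 : Integrable (fun p : EuclideanSpace ℝ (Fin 3) =>
      (Real.exp ‖p‖ - 1) * ‖gradient φ p‖ ^ 2))
    (h2 : Integrable (fun p : EuclideanSpace ℝ (Fin 3) =>
      (Real.exp ‖p‖ - 1) * (φ p) ^ 2)) :
    (∫ p : EuclideanSpace ℝ (Fin 3), (Real.exp ‖p‖ - 1) * ‖gradient φ p‖ ^ 2) ≥
      (1 / 4) * ∫ p : EuclideanSpace ℝ (Fin 3), (Real.exp ‖p‖ - 1) * (φ p) ^ 2 := by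
  have hφ' : Differentiable ℝ φ := hφ.differentiable one_ne_zero
  have hdiv := integrable_sqMulRadialFieldDiv hφ'.continuous h1 h2
  have : 1 / 2 * ∫ p, (exp ‖p‖ - 1) * φ p ^ 2 ≤ 2 * ∫ p, (exp ‖p‖ - 1) * ‖gradient φ p‖ ^ 2 :=
    calc 1 / 2 * ∫ p, (exp ‖p‖ - 1) * φ p ^ 2
        = ∫ p, 1 / 2 * ((exp ‖p‖ - 1) * φ p ^ 2) := (integral_const_mul _ _).symm
      _ ≤ ∫ p, (sqMulRadialFieldDiv φ p + 2 * ((exp ‖p‖ - 1) * ‖gradient φ p‖ ^ 2)) :=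
        integral_mono (h2.const_mul _) (hdiv.add (h1.const_mul 2))
          (half_mul_sq_le_sqMulRadialFieldDiv φ)
      _ = 2 * ∫ p, (exp ‖p‖ - 1) * ‖gradient φ p‖ ^ 2 := by
        rw [integral_add hdiv (h1.const_mul 2), integral_sqMulRadialFieldDiv_eq_zero hφ' h1 h2,
          integral_const_mul, zero_add]
  linarith
end

section
/- Let Ψ : ℝ³ → ℂ be measurable with |Ψ|² − 1 ∈ L¹(ℝ³), and define N_c(r) = C* ∫_{ℝ³} |Ψ(r′)|² e^{−|r−r′|} dr′, where C* = ( ∫_{ℝ³} e^{−|r′|} dr′ )^{-1} = 1/(8π). Then N_c is differentiable, its gradient satisfies ∇_r N_c(r) = −C* ∫_{ℝ³} ((r−r′)/|r−r′|) ( |Ψ(r′)|² − 1 ) e^{−|r−r′|} dr′ (using that ∫_{ℝ³} ((r−r′)/|r−r′|) e^{−|r−r′|} dr′ = 0), and consequently ‖∇_r N_c‖_{L^∞(ℝ³)} ≤ C* ‖ |Ψ|² − 1 ‖_{L¹(ℝ³)}. -/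
open MeasureTheory Real

noncomputable section

/-- Euclidean three-dimensional space. -/
abbrev E3 : Type := EuclideanSpace ℝ (Fin 3)

/-- The locally averaged condensate density
`N_c(r) = C* ∫ |Ψ(r′)|² e^{−|r−r′|} dr′` with `C* = 1/(8π)`. -/
def Ncond (Ψ : E3 → ℂ) (r : E3) : ℝ :=
  (1 / (8 * Real.pi)) * ∫ r' : E3, ‖Ψ r'‖ ^ 2 * Real.exp (-‖r - r'‖)

/-!
Writing `|Ψ|² = (|Ψ|² − 1) + 1` splits `N_c` into `C*` times the convolution of the
integrable function `|Ψ|² − 1` with the kernel `k(x) = e^{−|x|}`, plus the constant `C* ∫ k`.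
The kernel is `1`-Lipschitz and, away from the origin, has gradient `−e^{−|x|} x/|x|` of norm
at most `1`. Hence the convolution may be differentiated under the integral sign with the
integrable dominating function `||Ψ|² − 1|`, and the same pointwise bound gives the `L^∞`
estimate of the gradient.
-/

theorem Real.abs_exp_neg_sub_exp_neg_le {a b : ℝ} (ha : 0 ≤ a) (hb : 0 ≤ b) :
    |exp (-a) - exp (-b)| ≤ |a - b| := by
  wlog hab : a ≤ b generalizing a b
  · rw [abs_sub_comm, abs_sub_comm a]
    exact this hb ha (le_of_not_ge hab)
  -- `e^{-a} - e^{-b} = e^{-a} (1 - e^{a-b}) ≤ 1 - e^{a-b} ≤ b - a`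
  have hexp : exp (-a) * exp (a - b) = exp (-b) := by rw [← exp_add]; ring_nf
  have hle : exp (-b) ≤ exp (-a) := exp_le_exp.2 (neg_le_neg hab)
  rw [abs_of_nonneg (sub_nonneg.2 hle), abs_of_nonpos (sub_nonpos.2 hab)]
  nlinarith [add_one_le_exp (a - b), exp_le_one_iff.2 (neg_nonpos.2 ha), exp_pos (-a)]

section NormedGroup

variable {E : Type*} [NormedAddCommGroup E]

theorem lipschitzWith_exp_neg_norm_sub (a : E) :
    LipschitzWith 1 fun x : E => exp (-‖x - a‖) :=
  LipschitzWith.of_dist_le_mul fun x y => by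
    rw [Real.dist_eq, NNReal.coe_one, one_mul, dist_eq_norm]
    calc |exp (-‖x - a‖) - exp (-‖y - a‖)| ≤ |‖x - a‖ - ‖y - a‖| :=
          abs_exp_neg_sub_exp_neg_le (norm_nonneg _) (norm_nonneg _)
      _ ≤ ‖(x - a) - (y - a)‖ := abs_norm_sub_norm_le _ _
      _ = ‖x - y‖ := by rw [sub_sub_sub_cancel_right]

theorem MeasureTheory.Integrable.mul_exp_neg_norm_sub [MeasurableSpace E] [BorelSpace E]
    {μ : Measure E} {f : E → ℝ} (hf : Integrable f μ) (x : E) :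
    Integrable (fun a => f a * exp (-‖x - a‖)) μ :=
  hf.mul_bdd (c := 1) (Continuous.aestronglyMeasurable (by fun_prop)) <| .of_forall fun a => by
    rw [Real.norm_of_nonneg (exp_pos _).le]
    exact exp_le_one_iff.2 (neg_nonpos.2 (norm_nonneg _))

theorem integrable_exp_neg_norm [NormedSpace ℝ E] [FiniteDimensional ℝ E] [MeasurableSpace E]
    [BorelSpace E] (μ : Measure E) [μ.IsAddHaarMeasure] :
    Integrable (fun x : E => exp (-‖x‖)) μ := by
  nontriviality E
  -- in polar coordinates this is the convergent integral `∫₀^∞ t^{d-1} e^{-t} dt = Γ(d)`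
  rw [integrable_fun_norm_addHaar μ (f := fun t => exp (-t))]
  have hdim : (Module.finrank ℝ E : ℝ) - 1 = ((Module.finrank ℝ E - 1 : ℕ) : ℝ) := by
    rw [Nat.cast_sub Module.finrank_pos, Nat.cast_one]
  have hGamma := GammaIntegral_convergent (Nat.cast_pos.2 (Module.finrank_pos (R := ℝ) (M := E)))
  simp only [hdim, rpow_natCast] at hGamma
  simpa only [smul_eq_mul, mul_comm] using hGamma

theorem integral_mul_exp_neg_norm_sub_eq [NormedSpace ℝ E] [FiniteDimensional ℝ E]
    [MeasurableSpace E] [BorelSpace E] {μ : Measure E} [μ.IsAddHaarMeasure] {g : E → ℝ}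
    (hg : Integrable (fun a => g a - 1) μ) (x : E) :
    ∫ a, g a * exp (-‖x - a‖) ∂μ
      = ∫ a, (g a - 1) * exp (-‖x - a‖) ∂μ + ∫ a, exp (-‖a‖) ∂μ := by
  have hk : ∫ a, exp (-‖x - a‖) ∂μ = ∫ a, exp (-‖a‖) ∂μ := by
    simp_rw [norm_sub_rev x]
    exact integral_sub_right_eq_self (fun a => exp (-‖a‖)) x
  have hk_int : Integrable (fun a => exp (-‖x - a‖)) μ := by
    simpa only [norm_sub_rev x] using (integrable_exp_neg_norm μ).comp_sub_right x
  rw [← hk, ← integral_add (hg.mul_exp_neg_norm_sub x) hk_int]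
  congr 1 with a
  ring

end NormedGroup

section InnerProductSpace

variable {E : Type*} [NormedAddCommGroup E] [InnerProductSpace ℝ E]

theorem norm_mul_exp_neg_norm_smul_le (c : ℝ) (y : E) :
    ‖(c * exp (-‖y‖)) • (‖y‖⁻¹ • y)‖ ≤ |c| := by
  have hunit : ‖‖y‖⁻¹ • y‖ ≤ 1 := by
    rcases eq_or_ne y 0 with rfl | hy
    · simp
    · exact (norm_smul_inv_norm hy).le
  rw [norm_smul, norm_mul, Real.norm_eq_abs, Real.norm_of_nonneg (exp_pos _).le, mul_assoc]
  refine mul_le_of_le_one_right (abs_nonneg c) ?_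
  exact mul_le_one₀ (exp_le_one_iff.2 (neg_nonpos.2 (norm_nonneg y))) (norm_nonneg _) hunit

theorem norm_integral_mul_exp_neg_norm_sub_smul_le [MeasurableSpace E] {μ : Measure E}
    {f : E → ℝ} (hf : Integrable f μ) (x : E) :
    ‖∫ a, (f a * exp (-‖x - a‖)) • (‖x - a‖⁻¹ • (x - a)) ∂μ‖ ≤ ∫ a, |f a| ∂μ :=
  norm_integral_le_of_norm_le hf.abs (.of_forall fun _ => norm_mul_exp_neg_norm_smul_le _ _)

theorem hasFDerivAt_norm_sub {a x : E} (hx : x ≠ a) :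
    HasFDerivAt (fun y : E => ‖y - a‖) (‖x - a‖⁻¹ • innerSL ℝ (x - a)) x := by
  have hpos : 0 < ‖x - a‖ := norm_pos_iff.2 (sub_ne_zero.2 hx)
  have hsq := ((hasFDerivAt_id x).sub_const a).norm_sq
  have hsqrt := (hasDerivAt_sqrt (pow_pos hpos 2).ne').comp_hasFDerivAt x hsq
  simp only [Function.comp_def, id, sqrt_sq (norm_nonneg _)] at hsqrt
  refine hsqrt.congr_fderiv ?_
  ext v
  simp only [one_div, mul_inv_rev, map_sub, ContinuousLinearMap.comp_id,
    smul_apply, sub_apply, coe_innerSL_apply,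
    nsmul_eq_mul, Nat.cast_ofNat, smul_eq_mul]
  field_simp

theorem hasGradientAt_mul_exp_neg_norm_sub [CompleteSpace E] (c : ℝ) {a x : E} (hx : x ≠ a) :
    HasGradientAt (fun y : E => c * exp (-‖y - a‖))
      (-((c * exp (-‖x - a‖)) • (‖x - a‖⁻¹ • (x - a)))) x := by
  rw [hasGradientAt_iff_hasFDerivAt]
  refine (((hasFDerivAt_norm_sub hx).fun_neg.exp).const_mul c).congr_fderiv ?_
  ext v
  simp only [map_sub, smul_neg, neg_apply, smul_apply,
    sub_apply, coe_innerSL_apply, smul_eq_mul, map_neg, map_smul,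
    InnerProductSpace.toDual_apply_apply, neg_inj]
  ring

variable [MeasurableSpace E] [BorelSpace E] [SecondCountableTopology E] {μ : Measure E}
  {f : E → ℝ}

theorem MeasureTheory.Integrable.mul_exp_neg_norm_sub_smul (hf : Integrable f μ) (x : E) :
    Integrable (fun a => (f a * exp (-‖x - a‖)) • (‖x - a‖⁻¹ • (x - a))) μ :=
  hf.abs.mono' (by have := hf.aestronglyMeasurable; fun_prop)
    (.of_forall fun _ => norm_mul_exp_neg_norm_smul_le _ _)

theorem hasGradientAt_integral_mul_exp_neg_norm_sub [CompleteSpace E] [NullSingletonClass μ]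
    (hf : Integrable f μ) (x : E) :
    HasGradientAt (fun y => ∫ a, f a * exp (-‖y - a‖) ∂μ)
      (-∫ a, (f a * exp (-‖x - a‖)) • (‖x - a‖⁻¹ • (x - a)) ∂μ) x := by
  set g := fun a => (f a * exp (-‖x - a‖)) • (‖x - a‖⁻¹ • (x - a))
  have hg : Integrable g μ := hf.mul_exp_neg_norm_sub_smul x
  have hlip : ∀ a, LipschitzWith (Real.nnabs (f a)) fun y : E => f a * exp (-‖y - a‖) := by
    intro a
    have := (lipschitzWith_smul (f a)).comp (lipschitzWith_exp_neg_norm_sub a)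
    rwa [mul_one, show ‖f a‖₊ = Real.nnabs (f a) from NNReal.eq (by simp)] at this
  have hdiff : ∀ᵐ a ∂μ, HasFDerivAt (fun y => f a * exp (-‖y - a‖)) (innerSL ℝ (-g a)) x := by
    filter_upwards [μ.ae_ne x] with a ha
    exact (hasGradientAt_mul_exp_neg_norm_sub (f a) (Ne.symm ha)).hasFDerivAt
  obtain ⟨-, hderiv⟩ := hasFDerivAt_integral_of_dominated_loc_of_lip
    (F' := fun a => innerSL ℝ (-g a)) Filter.univ_mem
    (.of_forall fun y => (hf.mul_exp_neg_norm_sub y).aestronglyMeasurable)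
    (hf.mul_exp_neg_norm_sub x)
    ((innerSL ℝ).continuous.comp_aestronglyMeasurable hg.neg.aestronglyMeasurable)
    (.of_forall fun a => (hlip a).lipschitzOnWith) hf hdiff
  rw [(innerSL ℝ).integral_comp_comm (φ := fun a => -g a) hg.neg, integral_neg] at hderiv
  exact hderiv

end InnerProductSpace

theorem hasGradientAt_ncond {Ψ : E3 → ℂ} (hL1 : Integrable (fun r' : E3 => ‖Ψ r'‖ ^ 2 - 1))
    (r : E3) :
    HasGradientAt (Ncond Ψ)
      (-((1 / (8 * π)) •
        ∫ r' : E3, ((‖Ψ r'‖ ^ 2 - 1) * exp (-‖r - r'‖)) • (‖r - r'‖⁻¹ • (r - r')))) r := by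
  have hsplit : Ncond Ψ = fun x => 1 / (8 * π) *
      ((∫ a, (‖Ψ a‖ ^ 2 - 1) * exp (-‖x - a‖)) + ∫ a : E3, exp (-‖a‖)) := by
    ext x
    rw [Ncond, integral_mul_exp_neg_norm_sub_eq hL1]
  rw [hsplit, hasGradientAt_iff_hasFDerivAt, ← smul_neg, map_smulₛₗ]
  exact (((hasGradientAt_integral_mul_exp_neg_norm_sub hL1 r).hasFDerivAt).add_const _).const_mul _

theorem gradient_averaged_condensate_density_general
    (Ψ : E3 → ℂ)
    (hL1 : Integrable (fun r' : E3 => ‖Ψ r'‖ ^ 2 - 1)) :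
    Differentiable ℝ (Ncond Ψ) ∧
    (∀ r : E3, gradient (Ncond Ψ) r
      = -((1 / (8 * Real.pi)) •
          ∫ r' : E3, ((‖Ψ r'‖ ^ 2 - 1) * Real.exp (-‖r - r'‖)) •
            (‖r - r'‖⁻¹ • (r - r')))) ∧
    ∀ r : E3, ‖gradient (Ncond Ψ) r‖
      ≤ (1 / (8 * Real.pi)) * ∫ r' : E3, |‖Ψ r'‖ ^ 2 - 1| := by
  have hgrad := hasGradientAt_ncond hL1
  refine ⟨fun r => (hgrad r).differentiableAt, fun r => (hgrad r).gradient, fun r => ?_⟩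
  have hC : 0 ≤ 1 / (8 * π) := by positivity
  rw [(hgrad r).gradient, norm_neg, norm_smul, Real.norm_of_nonneg hC]
  exact mul_le_mul_of_nonneg_left (norm_integral_mul_exp_neg_norm_sub_smul_le hL1 r) hC

/-- **Gradient of the averaged condensate density.**
If `|Ψ|² − 1 ∈ L¹(ℝ³)` then `N_c` is differentiable, its gradient is
`∇N_c(r) = −C* ∫ ((r−r′)/|r−r′|)(|Ψ(r′)|²−1) e^{−|r−r′|} dr′`, and
`‖∇N_c‖_{L^∞} ≤ C* ‖|Ψ|²−1‖_{L¹}`. -/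
theorem gradient_averaged_condensate_density
    (Ψ : E3 → ℂ) (hmeas : Measurable Ψ)
    (hL1 : Integrable (fun r' : E3 => ‖Ψ r'‖ ^ 2 - 1)) :
    Differentiable ℝ (Ncond Ψ) ∧
    (∀ r : E3, gradient (Ncond Ψ) r
      = -((1 / (8 * Real.pi)) •
          ∫ r' : E3, ((‖Ψ r'‖ ^ 2 - 1) * Real.exp (-‖r - r'‖)) •
            (‖r - r'‖⁻¹ • (r - r')))) ∧
    ∀ r : E3, ‖gradient (Ncond Ψ) r‖
      ≤ (1 / (8 * Real.pi)) * ∫ r' : E3, |‖Ψ r'‖ ^ 2 - 1| :=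
  gradient_averaged_condensate_density_general Ψ hL1
end
end
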